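/- There exists a constant C ≥ 1 such that for every n ≥ 1 and every x ∈ S¹, C^{−1} ≤ Σ_{y ∈ E^{−n}(x)} ((E^n)′(y))^{−1} ≤ C, where the sum ranges over the ℓ^n preimages of x under the n-th iterate E^n. -/

import Mathlib

noncomputable section

open Filter Set Topology MeasureTheory

/-- The circle `ℝ/ℤ`. -/
abbrev 𝕊 : Type := UnitAddCircle

/-- The canonical representative in `[0,1)` of a point of the circle. -/
def rep (x : 𝕊) : ℝ := (AddCircle.equivIco 1 0 x : ℝ)

/-- A `C^r` expanding map of the circle of degree `ℓ`, presented by a lift `ℝ → ℝ`,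
together with the expansion constants `1 < λ ≤ Λ` bounding its derivative. -/
structure ExpMap (r : ℕ) (ℓ : ℕ) : Type where
  toFun : ℝ → ℝ
  contDiff : ContDiff ℝ r toFun
  degree : ∀ x : ℝ, toFun (x + 1) = toFun x + ℓ
  lam : ℝ
  Lam : ℝ
  one_lt_lam : 1 < lam
  lam_le_Lam : lam ≤ Lam
  lam_le_deriv : ∀ x : ℝ, lam ≤ deriv toFun x
  deriv_le_Lam : ∀ x : ℝ, deriv toFun x ≤ Lam

/-- A real-valued `C^s` function on the circle, presented by a `1`-periodic lift. -/
structure CrFun (s : ℕ∞) : Type where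
  toFun : ℝ → ℝ
  contDiff : ContDiff ℝ s toFun
  periodic : ∀ x : ℝ, toFun (x + 1) = toFun x

variable {r ℓ : ℕ}

/-- The induced map on the circle. -/
def ExpMap.map (E : ExpMap r ℓ) : 𝕊 → 𝕊 := fun x => ((E.toFun (rep x) : ℝ) : 𝕊)

/-- `(E^n)'(x)`, the derivative of the `n`-th iterate at a circle point. -/
def ExpMap.derivn (E : ExpMap r ℓ) (n : ℕ) (x : 𝕊) : ℝ := deriv (E.toFun^[n]) (rep x)

/-- `‖τ'‖_∞`, the sup-norm of the derivative of `τ`. -/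
def CrFun.dsup {s : ℕ∞} (τ : CrFun s) : ℝ :=
  sSup ((fun x => |deriv τ.toFun x|) '' Set.Icc (0:ℝ) 1)

/-- The skew product `f = f_{E,τ} : 𝕋² → 𝕋²`, `f(x,s) = (E x, s + τ x)`. -/
def skew (E : ExpMap r ℓ) {s : ℕ∞} (τ : CrFun s) : 𝕊 × 𝕊 → 𝕊 × 𝕊 :=
  fun z => (E.map z.1, z.2 + ((τ.toFun (rep z.1) : ℝ) : 𝕊))

/-- The Jacobian matrix `Df(z)`, depending only on the base coordinate. -/
def Jac1 (E : ExpMap r ℓ) {s : ℕ∞} (τ : CrFun s) (x : 𝕊) : Matrix (Fin 2) (Fin 2) ℝ :=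
  !![deriv E.toFun (rep x), 0; deriv τ.toFun (rep x), 1]

/-- The Jacobian matrix `Df^n(z)` of the `n`-th iterate. -/
def Jacn (E : ExpMap r ℓ) {s : ℕ∞} (τ : CrFun s) : ℕ → 𝕊 × 𝕊 → Matrix (Fin 2) (Fin 2) ℝ
  | 0, _ => 1
  | n+1, z => Jacn E τ n (skew E τ z) * Jac1 E τ z.1

/-- `Df^n` as a function of the base point only. -/
def JacnB (E : ExpMap r ℓ) {s : ℕ∞} (τ : CrFun s) (n : ℕ) (x : 𝕊) : Matrix (Fin 2) (Fin 2) ℝ :=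
  Jacn E τ n (x, (0 : 𝕊))

/-- The cone `K_R = {(ξ,η) : |η| ≤ ϑ_R |ξ|}` with `ϑ_R = R/(λ-1)`. -/
def ExpMap.cone (E : ExpMap r ℓ) (R : ℝ) : Set (Fin 2 → ℝ) :=
  {v | |v 1| ≤ R / (E.lam - 1) * |v 0|}

/-- A unit vector of `ℝ²`. -/
def IsUnitVec (v : Fin 2 → ℝ) : Prop := v 0 ^ 2 + v 1 ^ 2 = 1

/-- `𝔫(τ,R;n) = sup_z sup_v #{ζ ∈ f^{-n}(z) : v ∈ Df^n(ζ) K_R}`. -/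
def nQ (E : ExpMap r ℓ) {s : ℕ∞} (τ : CrFun s) (R : ℝ) (n : ℕ) : ℝ :=
  sSup {c : ℝ | ∃ (z : 𝕊 × 𝕊) (v : Fin 2 → ℝ), IsUnitVec v ∧
    c = ({ζ : 𝕊 × 𝕊 | (skew E τ)^[n] ζ = z ∧
      v ∈ (Jacn E τ n ζ).mulVec '' E.cone R}.ncard : ℝ)}

/-- `𝔫(τ) = lim_n 𝔫(τ,R;n)^{1/n}` (computed with the choice `R = ‖τ'‖_∞ + 1`). -/
def nlim (E : ExpMap r ℓ) {s : ℕ∞} (τ : CrFun s) : ℝ :=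
  limUnder atTop (fun n : ℕ => nQ E τ (τ.dsup + 1) n ^ ((n : ℝ)⁻¹))

/-- The `C^r` distance between two (lifts of) functions on the circle. -/
def crDist (r : ℕ) (f g : ℝ → ℝ) : ℝ :=
  sSup {c : ℝ | ∃ i ≤ r, ∃ x ∈ Set.Icc (0:ℝ) 1, c = |iteratedDeriv i f x - iteratedDeriv i g x|}

/-- `x_α`: the preimage point of `x` coded by the word `α = (α_n, …, α_1)`,
given the system `g` of inverse branches of `E`; here `α i` is the letter `α_{i+1}`. -/
def codePt (g : Fin ℓ → 𝕊 → 𝕊) : {n : ℕ} → (Fin n → Fin ℓ) → 𝕊 → 𝕊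
  | 0, _, x => x
  | n+1, α, x => g (α (Fin.last n)) (codePt g (fun i : Fin n => α i.castSucc) x)

/-- `[α]_p`, the truncation of a word to length `p`. -/
def trunc {ℓ n : ℕ} (α : Fin n → Fin ℓ) (p : ℕ) (h : p ≤ n) : Fin p → Fin ℓ :=
  fun i => α (Fin.castLE h i)

/-- `S_n(x;α;ψ) = Σ_{k=1}^n ψ'(x_{[α]_k}) / (E^k)'(x_{[α]_k})`. -/
def Ssum (E : ExpMap r ℓ) (g : Fin ℓ → 𝕊 → 𝕊) (ψ : ℝ → ℝ) {n : ℕ}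
    (α : Fin n → Fin ℓ) (x : 𝕊) : ℝ :=
  ∑ k : Fin n, deriv ψ (rep (codePt g (trunc α (k.1+1) k.isLt) x)) /
    E.derivn (k.1+1) (codePt g (trunc α (k.1+1) k.isLt) x)

/-- `S(x;ω) = Σ_{k=1}^∞ τ'(x_{[ω]_k}) / (E^k)'(x_{[ω]_k})` for an infinite word `ω`. -/
def Sinf (E : ExpMap r ℓ) (g : Fin ℓ → 𝕊 → 𝕊) (ψ : ℝ → ℝ) (y : 𝕊) (ω : ℕ → Fin ℓ) : ℝ :=
  ∑' k : ℕ, deriv ψ (rep (codePt g (fun i : Fin (k+1) => ω i) y)) /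
    E.derivn (k+1) (codePt g (fun i : Fin (k+1) => ω i) y)

/-- Faure's counting function `Ñ_{R̃}(n)`. -/
def Ntilde (E : ExpMap r ℓ) (g : Fin ℓ → 𝕊 → 𝕊) {s : ℕ∞} (τ : CrFun s) (Rt : ℝ) (n : ℕ) : ℝ :=
  sSup {c : ℝ | ∃ (y : 𝕊) (η : ℝ),
    c = ({α : Fin n → Fin ℓ | ∃ ω : ℕ → Fin ℓ, (∀ i : Fin n, ω i = α i) ∧
      |η - Sinf E g τ.toFun y ω| ≤ Rt * (E.derivn n (codePt g α y))⁻¹}.ncard : ℝ)}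

/-- `𝐧(τ,R;n)`. -/
def nnQ (E : ExpMap r ℓ) {s : ℕ∞} (τ : CrFun s) (R : ℝ) (n : ℕ) : ℝ :=
  sSup {c : ℝ | ∃ (z : 𝕊 × 𝕊) (v : Fin 2 → ℝ), IsUnitVec v ∧
    c = ∑ᶠ ζ ∈ {ζ : 𝕊 × 𝕊 | (skew E τ)^[n] ζ = z ∧
        v ∈ (Jacn E τ n ζ).mulVec '' E.cone R}, ((Jacn E τ n ζ).det)⁻¹}

/-- `𝐧(τ) = limsup_n 𝐧(τ,R;n)^{1/n}` (with `R = ‖τ'‖_∞ + 1`). -/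
def nnlim (E : ExpMap r ℓ) {s : ℕ∞} (τ : CrFun s) : ℝ :=
  limsup (fun n : ℕ => nnQ E τ (τ.dsup + 1) n ^ ((n : ℝ)⁻¹)) atTop

/-- `𝐦(τ,R;n)`. -/
def mmQ (E : ExpMap r ℓ) {s : ℕ∞} (τ : CrFun s) (R : ℝ) (n : ℕ) : ℝ :=
  sSup {c : ℝ | ∃ (z w : 𝕊 × 𝕊), (skew E τ)^[n] w = z ∧
    c = ∑ᶠ ζ ∈ {ζ : 𝕊 × 𝕊 | (skew E τ)^[n] ζ = z ∧
        ((Jacn E τ n ζ).mulVec '' E.cone R) ∩ ((Jacn E τ n w).mulVec '' E.cone R) = {0}},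
      ((Jacn E τ n ζ).det)⁻¹}

/-- `𝐦(τ) = limsup_n 𝐦(τ,R;n)^{1/n}` (with `R = ‖τ'‖_∞ + 1`). -/
def mmlim (E : ExpMap r ℓ) {s : ℕ∞} (τ : CrFun s) : ℝ :=
  limsup (fun n : ℕ => mmQ E τ (τ.dsup + 1) n ^ ((n : ℝ)⁻¹)) atTop

/-- `χ = lim_n (min_x (E^n)'(x))^{-1/n}`. -/
def chi (E : ExpMap r ℓ) : ℝ :=
  limUnder atTop (fun n : ℕ => (sInf (Set.range (E.derivn n))) ^ (-((n : ℝ)⁻¹)))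

/-- The Gram-determinant Jacobian `Jac(M) = √(det (M Mᵀ))` of a `p × m` matrix,
which equals the modulus of the Jacobian determinant of the restriction of the
associated linear map to the orthogonal complement of its kernel when the map is
surjective, and `0` otherwise. -/
def gramJac {p m : ℕ} (M : Matrix (Fin p) (Fin m) ℝ) : ℝ :=
  Real.sqrt (M * M.transpose).det

/-- The Jacobian of a linear map between Euclidean spaces. -/
def linJac {d e : ℕ} (L : EuclideanSpace ℝ (Fin d) →ₗ[ℝ] EuclideanSpace ℝ (Fin e)) : ℝ :=
  gramJac (LinearMap.toMatrix (EuclideanSpace.basisFun (Fin d) ℝ).toBasis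
    (EuclideanSpace.basisFun (Fin e) ℝ).toBasis L)

/-!
Work with a lift `F` of `E`. The preimages of `x = [a]` under `E^n` are the classes of the points
`u m = (F^n)⁻¹ (a + m)`, `0 ≤ m < ℓ^n`, and the gaps `u (m + 1) - u m` add up to `1`. By the mean
value theorem each gap is `1 / (F^n)'(ξ)` for some `ξ` whose `F^n`-image is within `1` of that of
`u m`, so it suffices to bound the distortion of `F^n` over unit image intervals. Along two such
orbits the distance at time `k` is at most `λ^(k - n)`, and `log F'` is Lipschitz because `F` is
`C²`; summing the geometric series bounds the ratio `(F^n)'(y) / (F^n)'(z)` independently of `n`.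
-/

open Function Finset
open scoped NNReal

theorem Function.Periodic.deriv {g : ℝ → ℝ} {c : ℝ} (hg : Periodic g c) : Periodic (deriv g) c :=
  fun x => by rw [← deriv_comp_add_const, show (fun y => g (y + c)) = g from funext hg]

section Lift

variable {G : ℝ → ℝ} {N : ℕ}

theorem add_intCast_of_add_one (h : ∀ t, G (t + 1) = G t + N) (t : ℝ) (m : ℤ) :
    G (t + m) = G t + N * m := by
  have hper : Periodic (fun s => G s - N * s) 1 := fun s => by simp only [h]; ring
  have := hper.int_mul m t
  simp only [mul_one] at this
  linarith

theorem iterate_add_one_of_add_one (h : ∀ t, G (t + 1) = G t + N) (n : ℕ) (t : ℝ) :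
    G^[n] (t + 1) = G^[n] t + (N ^ n : ℕ) := by
  induction n generalizing t with
  | zero => simp
  | succ n ih =>
    rw [iterate_succ_apply, iterate_succ_apply, h, ← Int.cast_natCast (R := ℝ) N,
      add_intCast_of_add_one ih]
    push_cast
    ring

theorem periodic_deriv_of_add_one (h : ∀ t, G (t + 1) = G t + N) : Periodic (deriv G) 1 :=
  fun t => by rw [← deriv_comp_add_const, funext h, deriv_add_const]

theorem pos_of_strictMono_of_add_one (hG : StrictMono G) (h : ∀ t, G (t + 1) = G t + N) :
    0 < N := by
  have := hG (lt_add_one (0 : ℝ))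
  rw [h] at this
  exact_mod_cast (lt_add_iff_pos_right _).mp this

theorem surjective_of_add_one (hG : StrictMono G) (hcont : Continuous G)
    (h : ∀ t, G (t + 1) = G t + N) : Surjective G := by
  intro c
  have hN : (1 : ℝ) ≤ N := by exact_mod_cast pos_of_strictMono_of_add_one hG h
  obtain ⟨m, hm⟩ := exists_nat_ge |c - G 0|
  have hm0 : (0 : ℝ) ≤ m := m.cast_nonneg
  have hlo : G (-m) ≤ c := by
    have := add_intCast_of_add_one h 0 (-m)
    push_cast at this
    rw [zero_add] at this
    nlinarith [neg_abs_le (c - G 0)]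
  have hhi : c ≤ G m := by
    have := add_intCast_of_add_one h 0 m
    push_cast at this
    rw [zero_add] at this
    nlinarith [le_abs_self (c - G 0)]
  obtain ⟨t, -, ht⟩ := intermediate_value_Icc (by linarith) hcont.continuousOn ⟨hlo, hhi⟩
  exact ⟨t, ht⟩

end Lift

section Circle

theorem coe_add_intCast (t : ℝ) (m : ℤ) : ((t + m : ℝ) : 𝕊) = t := by
  rw [AddCircle.coe_add, add_eq_left, AddCircle.coe_eq_zero_iff 1]
  exact ⟨m, by simp⟩

theorem coe_eq_coe_iff_exists_int {s t : ℝ} : (s : 𝕊) = t ↔ ∃ m : ℤ, s = t + m := by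
  refine ⟨fun h => ?_, fun ⟨m, hm⟩ => hm ▸ coe_add_intCast t m⟩
  obtain ⟨m, hm⟩ := (AddCircle.coe_eq_zero_iff 1).mp (by rw [AddCircle.coe_sub, h, sub_self] :
    ((s - t : ℝ) : 𝕊) = 0)
  exact ⟨m, by simp at hm; linarith⟩

theorem coe_rep (x : 𝕊) : (rep x : 𝕊) = x := AddCircle.coe_equivIco

theorem exists_rep_coe_eq (t : ℝ) : ∃ m : ℤ, rep t = t + m :=
  coe_eq_coe_iff_exists_int.mp (coe_rep t)

variable {G : ℝ → ℝ} {N : ℕ}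

theorem coe_apply_rep_coe (h : ∀ t, G (t + 1) = G t + N) (t : ℝ) : (G (rep t) : 𝕊) = G t := by
  obtain ⟨m, hm⟩ := exists_rep_coe_eq t
  rw [hm, add_intCast_of_add_one h, ← Int.cast_natCast, ← Int.cast_mul, coe_add_intCast]

theorem deriv_rep_coe (h : ∀ t, G (t + 1) = G t + N) (t : ℝ) : deriv G (rep t) = deriv G t := by
  obtain ⟨m, hm⟩ := exists_rep_coe_eq t
  simpa [hm] using (periodic_deriv_of_add_one h).int_mul m t

end Circle

section Fiber

variable {G : ℝ → ℝ} {N : ℕ}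

theorem finsum_fiber_eq_sum_range (hG : Injective G) (h : ∀ t, G (t + 1) = G t + N)
    {g : 𝕊 → 𝕊} (hg : ∀ t : ℝ, g t = G t) {a : ℝ} {u : ℤ → ℝ} (hu : ∀ m : ℤ, G (u m) = a + m)
    (φ : 𝕊 → ℝ) :
    ∑ᶠ y ∈ {y : 𝕊 | g y = a}, φ y = ∑ m ∈ range N, φ (u m) := by
  have hN : (N : ℤ) ≠ 0 := by
    rintro hN
    exact one_ne_zero (hG (by simpa [Int.natCast_eq_zero.mp hN] using h 0))
  have u_add : ∀ m q : ℤ, u (m + N * q) = u m + q := fun m q =>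
    hG (by rw [hu, add_intCast_of_add_one h, hu]; push_cast; ring)
  have hfiber : {y : 𝕊 | g y = a} = (fun m : ℕ => (u m : 𝕊)) '' ↑(range N) := by
    ext y
    obtain ⟨t, rfl⟩ := QuotientAddGroup.mk_surjective y
    simp only [Set.mem_ofPred_eq, Set.mem_image, Finset.mem_coe, Finset.mem_range]
    constructor
    · intro hy
      rw [show (QuotientAddGroup.mk t : 𝕊) = (t : 𝕊) from rfl, hg,
        coe_eq_coe_iff_exists_int] at hy
      obtain ⟨m, hm⟩ := hy
      have ht : t = u (m % N) + (m / N : ℤ) := by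
        rw [← u_add, Int.emod_add_mul_ediv]
        exact hG (by rw [hm, hu])
      have := Int.emod_lt_of_pos m (by omega : (0 : ℤ) < N)
      refine ⟨(m % N).toNat, by omega, ?_⟩
      rw [Int.toNat_of_nonneg (Int.emod_nonneg m hN), ht, coe_add_intCast]
    · rintro ⟨m, -, hm⟩
      rw [← hm, hg, hu, coe_add_intCast]
  have hinj : Set.InjOn (fun m : ℕ => (u m : 𝕊)) ↑(range N) := by
    intro m hm m' hm' hmm'
    simp only [Finset.coe_range, Set.mem_Iio] at hm hm'
    obtain ⟨q, hq⟩ := coe_eq_coe_iff_exists_int.mp hmm'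
    rw [← u_add] at hq
    have hmq : (m : ℤ) = m' + N * q := by
      have := congrArg G hq
      rw [hu, hu] at this
      exact_mod_cast (by push_cast at this ⊢; linarith : ((m : ℤ) : ℝ) = ((m' + N * q : ℤ) : ℝ))
    have := congrArg (· % (N : ℤ)) hmq
    simp only [Int.add_mul_emod_self_left] at this
    rw [Int.emod_eq_of_lt (by omega) (by omega), Int.emod_eq_of_lt (by omega) (by omega)] at this
    exact_mod_cast this
  rw [hfiber, finsum_mem_image hinj, finsum_mem_coe_finset]

def BoundedDistortion (G : ℝ → ℝ) (D : ℝ) : Prop :=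
  ∀ y z, |G y - G z| ≤ 1 → deriv G y ≤ D * deriv G z

variable {D : ℝ}

theorem inv_deriv_bounds_of_sub_eq_one (hG : Differentiable ℝ G) (hpos : ∀ t, 0 < deriv G t)
    (hD : BoundedDistortion G D) {a b : ℝ} (hab : a < b) (hGab : G b - G a = 1) :
    D⁻¹ * (b - a) ≤ (deriv G a)⁻¹ ∧ (deriv G a)⁻¹ ≤ D * (b - a) := by
  have hmono : StrictMono G := strictMono_of_deriv_pos hpos
  obtain ⟨ξ, ⟨haξ, hξb⟩, hξ⟩ :=
    exists_deriv_eq_slope G hab hG.continuous.continuousOn hG.differentiableOn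
  rw [hGab] at hξ
  have hξa : |G ξ - G a| ≤ 1 := by
    rw [abs_of_pos (sub_pos.mpr (hmono haξ))]
    linarith [hmono hξb]
  have hba : 0 < b - a := sub_pos.mpr hab
  have hDpos : 0 < D := pos_of_mul_pos_left ((hpos ξ).trans_le (hD ξ a hξa)) (hpos a).le
  have h₁ := hD ξ a hξa
  have h₂ := hD a ξ (by rwa [abs_sub_comm])
  rw [hξ] at h₁ h₂
  constructor
  · rw [le_inv_comm₀ (by positivity) (hpos a), mul_inv, inv_inv]
    calc deriv G a ≤ D * (1 / (b - a)) := h₂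
      _ = _ := by ring
  · rw [inv_le_comm₀ (hpos a) (by positivity)]
    calc (D * (b - a))⁻¹ = 1 / (b - a) / D := by field_simp
      _ ≤ deriv G a := by rw [div_le_iff₀ hDpos, mul_comm]; exact h₁

theorem sum_inv_deriv_bounds (hG : Differentiable ℝ G) (hpos : ∀ t, 0 < deriv G t)
    (h : ∀ t, G (t + 1) = G t + N) (hD : BoundedDistortion G D) {a : ℝ} {u : ℤ → ℝ}
    (hu : ∀ m : ℤ, G (u m) = a + m) :
    D⁻¹ ≤ ∑ m ∈ range N, (deriv G (u m))⁻¹ ∧ ∑ m ∈ range N, (deriv G (u m))⁻¹ ≤ D := by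
  have hmono : StrictMono G := strictMono_of_deriv_pos hpos
  have hstep (m : ℕ) := inv_deriv_bounds_of_sub_eq_one hG hpos hD (a := u m) (b := u (m + 1))
    (hmono.lt_iff_lt.mp (by rw [hu, hu]; push_cast; linarith)) (by rw [hu, hu]; push_cast; ring)
  have htel : ∑ m ∈ range N, (u (m + 1 : ℕ) - u m) = 1 := by
    have : u N = u 0 + 1 := hmono.injective (by rw [hu, h, hu]; push_cast; ring)
    rw [Finset.sum_range_sub (fun m : ℕ => u m), Nat.cast_zero, this, add_sub_cancel_left]
  push_cast at htel
  constructor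
  · calc D⁻¹ = ∑ m ∈ range N, D⁻¹ * (u (m + 1) - u m) := by rw [← mul_sum, htel, mul_one]
      _ ≤ _ := sum_le_sum fun m _ => (hstep m).1
  · calc _ ≤ ∑ m ∈ range N, D * (u (m + 1) - u m) := sum_le_sum fun m _ => (hstep m).2
      _ = D := by rw [← mul_sum, htel, mul_one]

end Fiber

section Expanding

variable {f : ℝ → ℝ} {c : ℝ}

theorem pow_mul_sub_le_iterate_sub (hf : Differentiable ℝ f) (hc : 0 ≤ c)
    (hcf : ∀ x, c ≤ deriv f x) (n : ℕ) {a b : ℝ} (hab : a ≤ b) :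
    c ^ n * (b - a) ≤ f^[n] b - f^[n] a := by
  induction n with
  | zero => simp
  | succ n ih =>
    have hmono : f^[n] a ≤ f^[n] b := by nlinarith [pow_nonneg hc n, sub_nonneg.mpr hab]
    rw [iterate_succ_apply', iterate_succ_apply', pow_succ', mul_assoc]
    calc c * (c ^ n * (b - a)) ≤ c * (f^[n] b - f^[n] a) := mul_le_mul_of_nonneg_left ih hc
      _ ≤ _ := mul_sub_le_image_sub_of_le_deriv hf hcf hmono

theorem pow_mul_abs_sub_le_abs_iterate_sub (hf : Differentiable ℝ f) (hc : 0 ≤ c)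
    (hcf : ∀ x, c ≤ deriv f x) (n : ℕ) (a b : ℝ) :
    c ^ n * |b - a| ≤ |f^[n] b - f^[n] a| := by
  rcases le_total a b with hab | hba
  · have := pow_mul_sub_le_iterate_sub hf hc hcf n hab
    rw [abs_of_nonneg (sub_nonneg.mpr hab)]
    exact this.trans (le_abs_self _)
  · have := pow_mul_sub_le_iterate_sub hf hc hcf n hba
    rw [abs_sub_comm, abs_of_nonneg (sub_nonneg.mpr hba), abs_sub_comm]
    exact this.trans (le_abs_self _)

theorem hasDerivAt_iterate (hf : Differentiable ℝ f) (n : ℕ) (t : ℝ) :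
    HasDerivAt f^[n] (∏ k ∈ range n, deriv f (f^[k] t)) t := by
  induction n with
  | zero => simpa using hasDerivAt_id t
  | succ n ih =>
    rw [iterate_succ', prod_range_succ, mul_comm]
    exact (hf _).hasDerivAt.comp t ih

theorem deriv_iterate_pos (hf : Differentiable ℝ f) (hpos : ∀ x, 0 < deriv f x) (n : ℕ)
    (t : ℝ) : 0 < deriv f^[n] t := by
  rw [(hasDerivAt_iterate hf n t).deriv]
  exact prod_pos fun k _ => hpos _

theorem deriv_le_mul_exp (hc : 0 < c) (hcf : ∀ x, c ≤ deriv f x) {K : ℝ≥0}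
    (hK : LipschitzWith K (deriv f)) (a b : ℝ) :
    deriv f a ≤ deriv f b * Real.exp (K / c * |a - b|) := by
  have hlip : deriv f a - deriv f b ≤ K * |a - b| := by
    simpa [Real.dist_eq] using (le_abs_self _).trans (hK.dist_le_mul a b)
  have hscale : K * |a - b| ≤ deriv f b * (K / c * |a - b|) := by
    calc K * |a - b| = c * (K / c * |a - b|) := by field_simp
      _ ≤ _ := mul_le_mul_of_nonneg_right (hcf b) (by positivity)
  calc deriv f a ≤ deriv f b * (K / c * |a - b| + 1) := by nlinarith
    _ ≤ _ := mul_le_mul_of_nonneg_left (Real.add_one_le_exp _) (hc.le.trans (hcf b))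

theorem sum_range_inv_pow_sub_le (hc : 1 < c) (n : ℕ) :
    ∑ k ∈ range n, (c ^ (n - k))⁻¹ ≤ (c - 1)⁻¹ := by
  have hc' : c⁻¹ < 1 := inv_lt_one_of_one_lt₀ hc
  calc ∑ k ∈ range n, (c ^ (n - k))⁻¹ = ∑ k ∈ Ico 1 (n + 1), c⁻¹ ^ k := by
        rw [range_eq_Ico]
        simpa [inv_pow] using sum_Ico_reflect (fun i => c⁻¹ ^ i) 0 n.le_succ
    _ ≤ c⁻¹ ^ 1 / (1 - c⁻¹) := geom_sum_Ico_le_of_lt_one (by positivity) hc'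
    _ = (c - 1)⁻¹ := by field_simp

theorem boundedDistortion_iterate (hf : Differentiable ℝ f) (hc : 1 < c)
    (hcf : ∀ x, c ≤ deriv f x) {K : ℝ≥0} (hK : LipschitzWith K (deriv f)) (n : ℕ) :
    BoundedDistortion f^[n] (Real.exp (K / c * (c - 1)⁻¹)) := by
  intro y z hyz
  have hc0 : 0 < c := one_pos.trans hc
  have hpos : ∀ x, 0 < deriv f x := fun x => hc0.trans_le (hcf x)
  -- expansion of `f^[n - k]` brings the orbits together backwards in time
  have hclose : ∀ k ∈ range n, |f^[k] y - f^[k] z| ≤ (c ^ (n - k))⁻¹ := by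
    intro k hk
    have hnk : n - k + k = n := Nat.sub_add_cancel (mem_range.mp hk).le
    have := pow_mul_abs_sub_le_abs_iterate_sub hf hc0.le hcf (n - k) (f^[k] z) (f^[k] y)
    rw [← iterate_add_apply, ← iterate_add_apply, hnk] at this
    rw [← one_div, le_div_iff₀ (by positivity), mul_comm]
    linarith
  rw [(hasDerivAt_iterate hf n y).deriv, (hasDerivAt_iterate hf n z).deriv]
  calc ∏ k ∈ range n, deriv f (f^[k] y)
      ≤ ∏ k ∈ range n, deriv f (f^[k] z) * Real.exp (K / c * |f^[k] y - f^[k] z|) :=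
        prod_le_prod (fun k _ => (hpos _).le) fun k _ => deriv_le_mul_exp hc0 hcf hK _ _
    _ = Real.exp (K / c * ∑ k ∈ range n, |f^[k] y - f^[k] z|) *
          ∏ k ∈ range n, deriv f (f^[k] z) := by
        rw [prod_mul_distrib, ← Real.exp_sum, mul_sum, mul_comm]
    _ ≤ _ := by
        gcongr
        · exact prod_nonneg fun k _ => (hpos _).le
        · exact (sum_le_sum hclose).trans (sum_range_inv_pow_sub_le hc n)

end Expanding

namespace ExpMap

variable (E : ExpMap r ℓ)

theorem differentiable (hr : 1 ≤ r) : Differentiable ℝ E.toFun :=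
  E.contDiff.differentiable (by exact_mod_cast (by omega : r ≠ 0))

theorem exists_lipschitzWith_deriv (hr : 2 ≤ r) : ∃ K : ℝ≥0, LipschitzWith K (deriv E.toFun) := by
  have hd : ContDiff ℝ 1 (deriv E.toFun) :=
    ((contDiff_succ_iff_deriv (n := 1)).mp (E.contDiff.of_le (by exact_mod_cast hr))).2.2
  obtain ⟨K, hK⟩ := ((periodic_deriv_of_add_one E.degree).deriv.isBounded_of_continuous
    one_ne_zero (hd.continuous_deriv le_rfl)).exists_norm_le
  refine ⟨K.toNNReal, lipschitzWith_of_nnnorm_deriv_le (hd.differentiable one_ne_zero) fun x => ?_⟩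
  rw [← NNReal.coe_le_coe, coe_nnnorm]
  exact (hK _ ⟨x, rfl⟩).trans (le_max_left _ _)

theorem exists_boundedDistortion_iterate (hr : 2 ≤ r) :
    ∃ D, 1 ≤ D ∧ ∀ n, BoundedDistortion E.toFun^[n] D := by
  obtain ⟨K, hK⟩ := E.exists_lipschitzWith_deriv hr
  have hlam := E.one_lt_lam
  exact ⟨_, Real.one_le_exp (mul_nonneg (by positivity) (inv_nonneg.mpr (by linarith))),
    boundedDistortion_iterate (E.differentiable (by omega)) hlam E.lam_le_deriv hK⟩

theorem map_iterate_coe (n : ℕ) (t : ℝ) : E.map^[n] t = (E.toFun^[n] t : 𝕊) :=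
  (Semiconj.iterate_right (fun t => (coe_apply_rep_coe E.degree t).symm) n t).symm

theorem derivn_coe (n : ℕ) (t : ℝ) : E.derivn n t = deriv E.toFun^[n] t :=
  deriv_rep_coe (iterate_add_one_of_add_one E.degree n) t

end ExpMap

theorem stmt6_general (r ℓ : ℕ) (hr : 2 ≤ r) (E : ExpMap r ℓ) :
    ∃ C : ℝ, 1 ≤ C ∧ ∀ n : ℕ, 1 ≤ n → ∀ x : 𝕊,
      C⁻¹ ≤ ∑ᶠ y ∈ {y : 𝕊 | E.map^[n] y = x}, (E.derivn n y)⁻¹ ∧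
      ∑ᶠ y ∈ {y : 𝕊 | E.map^[n] y = x}, (E.derivn n y)⁻¹ ≤ C := by
  obtain ⟨D, hD1, hD⟩ := E.exists_boundedDistortion_iterate hr
  refine ⟨D, hD1, fun n _ x => ?_⟩
  obtain ⟨a, rfl⟩ := QuotientAddGroup.mk_surjective x
  have hf := E.differentiable (by omega)
  have hdeg := iterate_add_one_of_add_one E.degree n
  have hpos := deriv_iterate_pos hf (fun t => (one_pos.trans E.one_lt_lam).trans_le
    (E.lam_le_deriv t)) n
  have hmono : StrictMono E.toFun^[n] := strictMono_of_deriv_pos hpos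
  choose u hu using fun m : ℤ =>
    surjective_of_add_one hmono (hf.iterate n).continuous hdeg (a + m)
  rw [finsum_fiber_eq_sum_range hmono.injective hdeg (E.map_iterate_coe n) hu]
  simp only [E.derivn_coe]
  exact sum_inv_deriv_bounds (hf.iterate n) hpos hdeg (hD n) hu

/-- distortion bound. There is a constant `C ≥ 1` such that for every
`n ≥ 1` and every `x ∈ 𝕊¹`, `C⁻¹ ≤ Σ_{y ∈ E^{-n}(x)} ((E^n)'(y))⁻¹ ≤ C`. -/
theorem stmt6 (r ℓ : ℕ) (hr : 2 ≤ r) (hl : 2 ≤ ℓ) (E : ExpMap r ℓ) :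
    ∃ C : ℝ, 1 ≤ C ∧ ∀ n : ℕ, 1 ≤ n → ∀ x : 𝕊,
      C⁻¹ ≤ ∑ᶠ y ∈ {y : 𝕊 | E.map^[n] y = x}, (E.derivn n y)⁻¹ ∧
      ∑ᶠ y ∈ {y : 𝕊 | E.map^[n] y = x}, (E.derivn n y)⁻¹ ≤ C :=
  stmt6_general r ℓ hr E
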